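/- There exists a finite MDP with agent rewards such that no deterministic policy satisfies the demographic parity constraint, but some stochastic policy does. -/

import Mathlib

/-- The transition matrix over states induced by a stochastic policy. -/
def indTrans {S A : Type*} [Fintype A] (π : S → A → ℝ) (P : S → A → S → ℝ)
    (s s' : S) : ℝ :=
  ∑ a, π s a * P s a s'

/-- The state distribution at time `t` induced by policy `π`, transitions `P`,
and initial distribution `D`. -/
def distAt {S A : Type*} [Fintype S] [Fintype A] (π : S → A → ℝ)
    (P : S → A → S → ℝ) (D : S → ℝ) : ℕ → S → ℝ
  | 0 => D
  | t + 1 => fun s' => ∑ s, distAt π P D t s * indTrans π P s s'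

/-- The expected discounted cumulative agent reward of policy `π` starting from
initial state distribution `D`. -/
noncomputable def agentVal {S A : Type*} [Fintype S] [Fintype A] (π : S → A → ℝ)
    (P : S → A → S → ℝ) (ρ : S → A → ℝ) (γ : ℝ) (D : S → ℝ) : ℝ :=
  (1 - γ) * ∑' t : ℕ, γ ^ t * ∑ s, distAt π P D t s * ∑ a, π s a * ρ s a

/-!
From either group's start state the chain moves in one step to a distribution that is
stationary, so the value is `γ` times the reward collected there. For the majority this is
`1 / 2` whatever the policy; for the minority it is the probability `π 2 1` of moving to the
reward-2 state. Parity therefore means `π 2 1 = 1 / 2`, which no deterministic policy achieves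
and the uniform policy does.
-/

lemma tsum_geometric_mul_eq_of_succ_const {γ r : ℝ} (hγ : |γ| < 1) {f : ℕ → ℝ}
    (hf : ∀ t, f (t + 1) = r) : ∑' t, γ ^ t * f t = f 0 + γ * r / (1 - γ) := by
  have htail : (fun t ↦ γ ^ (t + 1) * f (t + 1)) = fun t ↦ γ * r * γ ^ t := by
    funext t; rw [hf, pow_succ]; ring
  have hsum : Summable fun t ↦ γ ^ t * f t := by
    rw [← summable_nat_add_iff 1, htail]
    exact (summable_geometric_of_abs_lt_one hγ).mul_left _
  rw [hsum.tsum_eq_zero_add, htail, tsum_mul_left, tsum_geometric_of_abs_lt_one hγ]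
  simp [div_eq_mul_inv]

section Stationary

variable {S A : Type*} [Fintype S] [Fintype A] (π : S → A → ℝ) (P : S → A → S → ℝ)

def expectedReward (ρ : S → A → ℝ) (d : S → ℝ) : ℝ :=
  ∑ s, d s * ∑ a, π s a * ρ s a

lemma distAt_succ_eq_of_stationary {D d : S → ℝ} (h₁ : distAt π P D 1 = d)
    (hd : ∀ s', ∑ s, d s * indTrans π P s s' = d s') (t : ℕ) :
    distAt π P D (t + 1) = d := by
  induction t with
  | zero => exact h₁
  | succ t ih => funext s'; rw [distAt, ih]; exact hd s'

lemma agentVal_eq_of_stationary (ρ : S → A → ℝ) {γ : ℝ} (hγ : |γ| < 1) {D d : S → ℝ}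
    (h₁ : distAt π P D 1 = d) (hd : ∀ s', ∑ s, d s * indTrans π P s s' = d s') :
    agentVal π P ρ γ D = (1 - γ) * expectedReward π ρ D + γ * expectedReward π ρ d := by
  have hγ1 : 1 - γ ≠ 0 := by linarith [le_abs_self γ]
  rw [agentVal, tsum_geometric_mul_eq_of_succ_const hγ (r := expectedReward π ρ d)
    fun t ↦ by rw [distAt_succ_eq_of_stationary π P h₁ hd]; rfl]
  field_simp
  rfl

end Stationary

section Deterministic

variable {S A : Type*} [DecidableEq S] (next : S → A → S)

def detTrans (s : S) (a : A) (s' : S) : ℝ :=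
  if next s a = s' then 1 else 0

lemma detTrans_nonneg (s : S) (a : A) (s' : S) : 0 ≤ detTrans next s a s' := by
  unfold detTrans; positivity

lemma sum_detTrans [Fintype S] (s : S) (a : A) : ∑ s', detTrans next s a s' = 1 := by
  simp [detTrans]

end Deterministic

namespace ParityMDP

/-- States `0, 1` are `(0, maj), (1, maj)` and `2, 3, 4` are `(0, min), (1, min), (2, min)`. -/
def next : Fin 5 → Fin 2 → Fin 5 := ![fun _ ↦ 1, fun _ ↦ 1, ![3, 4], fun _ ↦ 3, fun _ ↦ 4]

def reward (s : Fin 5) (_ : Fin 2) : ℝ := ![0, 1, 0, 0, 2] s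

def initMaj : Fin 5 → ℝ := Pi.single 0 1

def initMin : Fin 5 → ℝ := Pi.single 2 1

variable {π : Fin 5 → Fin 2 → ℝ}

lemma agentVal_initMaj (hπ : ∀ s, ∑ a, π s a = 1) :
    agentVal π (detTrans next) reward (1 / 2) initMaj = 1 / 2 := by
  have h := fun s ↦ by simpa [Fin.sum_univ_two] using hπ s
  rw [agentVal_eq_of_stationary π _ reward (by norm_num) (d := Pi.single 1 1)]
  · simp [expectedReward, initMaj, reward, Fin.sum_univ_five, h]
  · funext s'
    fin_cases s' <;>
      simp [distAt, indTrans, initMaj, detTrans, next, Fin.sum_univ_five, Fin.sum_univ_two, h]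
  · intro s'
    fin_cases s' <;> simp [indTrans, detTrans, next, Fin.sum_univ_five, Fin.sum_univ_two, h]

lemma agentVal_initMin (hπ : ∀ s, ∑ a, π s a = 1) :
    agentVal π (detTrans next) reward (1 / 2) initMin = π 2 1 := by
  have h := fun s ↦ by simpa [Fin.sum_univ_two] using hπ s
  rw [agentVal_eq_of_stationary π _ reward (by norm_num) (d := ![0, 0, 0, π 2 0, π 2 1])]
  · simp [expectedReward, initMin, reward, Fin.sum_univ_five, Fin.sum_univ_two]
    linear_combination π 2 1 * h 4
  · funext s'
    fin_cases s' <;>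
      simp [distAt, indTrans, initMin, detTrans, next, Fin.sum_univ_five, Fin.sum_univ_two, h]
  · intro s'
    fin_cases s' <;> simp [indTrans, detTrans, next, Fin.sum_univ_five, Fin.sum_univ_two, h]

lemma agentVal_initMaj_eq_initMin_iff (hπ : ∀ s, ∑ a, π s a = 1) :
    agentVal π (detTrans next) reward (1 / 2) initMaj =
      agentVal π (detTrans next) reward (1 / 2) initMin ↔ π 2 1 = 1 / 2 := by
  rw [agentVal_initMaj hπ, agentVal_initMin hπ, eq_comm]

end ParityMDP

open ParityMDP in
theorem stmt12 :
    ∃ (P : Fin 5 → Fin 2 → Fin 5 → ℝ) (γ : ℝ) (ρ : Fin 5 → Fin 2 → ℝ)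
      (Dmaj Dmin : Fin 5 → ℝ),
      (∀ s a s', 0 ≤ P s a s') ∧ (∀ s a, ∑ s', P s a s' = 1) ∧
      0 ≤ γ ∧ γ < 1 ∧
      (∀ s, 0 ≤ Dmaj s) ∧ (∑ s, Dmaj s = 1) ∧
      (∀ s, 0 ≤ Dmin s) ∧ (∑ s, Dmin s = 1) ∧
      (∀ f : Fin 5 → Fin 2,
        agentVal (fun s a => if a = f s then (1 : ℝ) else 0) P ρ γ Dmaj ≠
          agentVal (fun s a => if a = f s then (1 : ℝ) else 0) P ρ γ Dmin) ∧
      (∃ π : Fin 5 → Fin 2 → ℝ, (∀ s a, 0 ≤ π s a) ∧ (∀ s, ∑ a, π s a = 1) ∧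
        agentVal π P ρ γ Dmaj = agentVal π P ρ γ Dmin) := by
  refine ⟨detTrans next, 1 / 2, reward, initMaj, initMin, detTrans_nonneg next,
    sum_detTrans next, by norm_num, by norm_num,
    fun s ↦ by rw [initMaj, Pi.single_apply]; positivity, by simp [initMaj],
    fun s ↦ by rw [initMin, Pi.single_apply]; positivity, by simp [initMin],
    fun f ↦ ?_, ⟨fun _ _ ↦ 1 / 2, by norm_num, by simp, ?_⟩⟩
  · rw [Ne, agentVal_initMaj_eq_initMin_iff fun s ↦ by simp]
    split_ifs <;> norm_num
  · rw [agentVal_initMaj_eq_initMin_iff fun s ↦ by norm_num]
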